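/- Let f : ℝⁿ → ℝ be a smooth positive function with u := log f, and let σ : J → ℝⁿ be a spacelike geodesic trajectory for f on an interval J ⊆ ℝ. Then the function s ↦ f(σ(s))·‖σ'(s)‖ is constant on J; equivalently ‖σ'(s)‖² = A / f(σ(s))² for all s ∈ J, where A = f(σ(0))²·‖σ'(0)‖² when 0 ∈ J. -/

import Mathlib

local notation "⟪" x ", " y "⟫_ℝ" => @inner ℝ _ _ x y
open Real Set Filter Topology

/-- The gradient `∇u` of `u = log f` on `ℝⁿ`. -/
noncomputable def gradlog {n : ℕ} (f : EuclideanSpace ℝ (Fin n) → ℝ)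
    (x : EuclideanSpace ℝ (Fin n)) : EuclideanSpace ℝ (Fin n) :=
  gradient (fun y => Real.log (f y)) x

/-- `σ` (with derivative `σ'`) is a spacelike geodesic trajectory for `f` on `J`:
`σ'' + 2⟨∇u(σ), σ'⟩·σ' − ‖σ'‖²·∇u(σ) = 0` on `J`, where `u = log f`. -/
def IsSpacelikeGeo {n : ℕ} (f : EuclideanSpace ℝ (Fin n) → ℝ)
    (σ σ' : ℝ → EuclideanSpace ℝ (Fin n)) (J : Set ℝ) : Prop :=
  (∀ s ∈ J, HasDerivAt σ (σ' s) s) ∧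
  ∀ s ∈ J, HasDerivAt σ'
    (-((2 * ⟪gradlog f (σ s), σ' s⟫_ℝ) • σ' s) + (‖σ' s‖ ^ 2) • gradlog f (σ s)) s

/-- along a spacelike geodesic trajectory, `f(σ(s))·‖σ'(s)‖` is constant
on `J`; equivalently `‖σ'(s)‖² = A / f(σ(s))²` with `A = f(σ(0))²·‖σ'(0)‖²` when `0 ∈ J`. -/
theorem stmt8 {n : ℕ} (f : EuclideanSpace ℝ (Fin n) → ℝ)
    (hf : ContDiff ℝ (⊤ : ℕ∞) f) (hfpos : ∀ x, 0 < f x)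
    (J : Set ℝ) (hJ : Convex ℝ J) (h0 : (0 : ℝ) ∈ J)
    (σ σ' : ℝ → EuclideanSpace ℝ (Fin n))
    (h : IsSpacelikeGeo f σ σ' J) :
    (∀ s ∈ J, ∀ t ∈ J, f (σ s) * ‖σ' s‖ = f (σ t) * ‖σ' t‖)
    ∧ ∀ s ∈ J, ‖σ' s‖ ^ 2 = (f (σ 0) ^ 2 * ‖σ' 0‖ ^ 2) / f (σ s) ^ 2 := by
  obtain ⟨hσ, hσ'⟩ := h
  set u : EuclideanSpace ℝ (Fin n) → ℝ := fun y => Real.log (f y) with hu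
  set g : ℝ → ℝ := fun t => Real.exp (2 * u (σ t)) * ⟪σ' t, σ' t⟫_ℝ with hg
  -- g has zero derivative on J
  have key : ∀ s ∈ J, HasDerivAt g 0 s := by
    intro s hs
    have hud : DifferentiableAt ℝ u (σ s) :=
      ((hf.differentiable (by simp)) (σ s)).log (ne_of_gt (hfpos (σ s)))
    have hgrad : HasGradientAt u (gradlog f (σ s)) (σ s) := hud.hasGradientAt
    have huσ : HasDerivAt (fun t => u (σ t)) ⟪gradlog f (σ s), σ' s⟫_ℝ s := by
      have := hgrad.hasFDerivAt.comp_hasDerivAt s (hσ s hs)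
      simp [InnerProductSpace.toDual_apply_apply] at this
      exact this
    set a : ℝ := ⟪gradlog f (σ s), σ' s⟫_ℝ with ha
    set N : ℝ := ⟪σ' s, σ' s⟫_ℝ with hN
    have hexp : HasDerivAt (fun t => Real.exp (2 * u (σ t)))
        (Real.exp (2 * u (σ s)) * (2 * a)) s := by
      have := ((huσ.const_mul (2:ℝ)).exp)
      simpa [mul_comm] using this
    have hd : ⟪σ' s, -((2 * a) • σ' s) + (‖σ' s‖ ^ 2) • gradlog f (σ s)⟫_ℝ
        + ⟪-((2 * a) • σ' s) + (‖σ' s‖ ^ 2) • gradlog f (σ s), σ' s⟫_ℝ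
        = -(2 * a) * N := by
      simp only [inner_add_left, inner_add_right, inner_neg_left, inner_neg_right,
        real_inner_smul_left, real_inner_smul_right]
      have e1 : ⟪σ' s, gradlog f (σ s)⟫_ℝ = a := by
        rw [ha]; exact real_inner_comm _ _
      have e2 : ⟪σ' s, σ' s⟫_ℝ = N := hN.symm
      have e3 : (‖σ' s‖:ℝ)^2 = N := by
        rw [hN]; exact (real_inner_self_eq_norm_sq _).symm
      rw [e1, e3]
      try rw [e2]
      ring
    have hinner : HasDerivAt (fun t => ⟪σ' t, σ' t⟫_ℝ) (-(2 * a) * N) s := by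
      have h2 := (hσ' s hs).inner ℝ (hσ' s hs)
      rw [← hd]
      exact h2
    have hmul := hexp.mul hinner
    have hz : Real.exp (2 * u (σ s)) * (2 * a) * ⟪σ' s, σ' s⟫_ℝ
        + Real.exp (2 * u (σ s)) * (-(2 * a) * N) = 0 := by
      rw [show ⟪σ' s, σ' s⟫_ℝ = N from rfl]; ring
    rw [hg, ← hz]
    exact hmul
  -- g is constant on J
  have hconst : ∀ s ∈ J, ∀ t ∈ J, g s = g t := by
    intro s hs t ht
    have := Convex.norm_image_sub_le_of_norm_hasDerivWithin_le (f := g) (f' := fun _ => 0)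
      (C := 0) (fun x hx => (key x hx).hasDerivWithinAt) (fun x _ => by simp) hJ ht hs
    simp only [zero_mul, norm_le_zero_iff, sub_eq_zero] at this
    exact this
  -- rewrite g in terms of f
  have hgf : ∀ t, g t = f (σ t) ^ 2 * ‖σ' t‖ ^ 2 := by
    intro t
    have hexpu : Real.exp (2 * u (σ t)) = f (σ t) ^ 2 := by
      rw [hu, mul_comm, Real.exp_mul, Real.exp_log (hfpos (σ t))]
      norm_num
    show Real.exp (2 * u (σ t)) * ⟪σ' t, σ' t⟫_ℝ = _
    rw [hexpu, real_inner_self_eq_norm_sq]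
  constructor
  · intro s hs t ht
    have hst := hconst s hs t ht
    rw [hgf, hgf] at hst
    have h2 : 0 ≤ f (σ s) * ‖σ' s‖ := mul_nonneg (hfpos _).le (norm_nonneg _)
    have h3 : 0 ≤ f (σ t) * ‖σ' t‖ := mul_nonneg (hfpos _).le (norm_nonneg _)
    nlinarith [hst, h2, h3]
  · intro s hs
    have hst := hconst s hs 0 h0
    rw [hgf, hgf] at hst
    have hne : f (σ s) ^ 2 ≠ 0 := pow_ne_zero _ (ne_of_gt (hfpos _))
    field_simp
    rw [eq_div_iff hne]
    linarith [hst]
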